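/- The empirical beta copula is obtained from the rank-based empirical copula by binomial smoothing: for all u ∈ [0,1]^d, ℂₙ^β(u) = E[C̃ₙ(S₁/n, …, S_d/n)], where S₁,…,S_d are independent with Sⱼ ~ Binomial(n, uⱼ). -/

import Mathlib

/-- `F_{n,r}(u) = Σ_{s=r}^{n} C(n,s) u^s (1−u)^{n−s}`, the CDF of the Beta(r, n+1−r)
distribution evaluated at `u` (via `P(U ≤ u) = P(S ≥ r)` for `S ~ Binomial(n,u)`). -/
noncomputable def betaCDF (n r : ℕ) (u : ℝ) : ℝ :=
  ∑ s ∈ Finset.Icc r n, (n.choose s : ℝ) * u ^ s * (1 - u) ^ (n - s)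

/-- The binomial probability mass function `P(S = k)` for `S ~ Binomial(n, p)`. -/
noncomputable def binomPMF (n : ℕ) (p : ℝ) (k : ℕ) : ℝ :=
  (n.choose k : ℝ) * p ^ k * (1 - p) ^ (n - k)

open scoped Classical in
/-- The rank-based empirical copula `C̃ₙ(u) = (1/n) Σᵢ ∏ⱼ 𝟙{R_{ij}/n ≤ uⱼ}`. -/
noncomputable def rankCopula (n d : ℕ) (R : Fin n → Fin d → ℕ) (u : Fin d → ℝ) : ℝ :=
  (1 / n) * ∑ i : Fin n, ∏ j : Fin d, if (R i j : ℝ) / n ≤ u j then (1 : ℝ) else 0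

/-- The empirical beta copula `ℂₙ^β(u) = (1/n) Σᵢ ∏ⱼ F_{n,R_{ij}}(uⱼ)`. -/
noncomputable def empBetaCopula (n d : ℕ) (R : Fin n → Fin d → ℕ) (u : Fin d → ℝ) : ℝ :=
  (1 / n) * ∑ i : Fin n, ∏ j : Fin d, betaCDF n (R i j) (u j)

/-!
Since `F_{n,r}(u) = P(S ≥ r) = E[𝟙{r/n ≤ S/n}]` for `S ~ Binomial(n,u)`, independence turns each
row product `∏ⱼ F_{n,R_{ij}}(uⱼ)` into `E[∏ⱼ 𝟙{R_{ij}/n ≤ Sⱼ/n}]`; averaging over the rows and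
exchanging the two finite sums gives the binomial smoothing of `C̃ₙ`.
-/

theorem betaCDF_eq_sum_binomPMF (n r : ℕ) (u : ℝ) :
    betaCDF n r u = ∑ k : Fin (n + 1), if r ≤ (k : ℕ) then binomPMF n u k else 0 := by
  rw [Fin.sum_univ_eq_sum_range (fun k => if r ≤ k then binomPMF n u k else 0),
    ← Finset.sum_filter]
  apply Finset.sum_congr _ fun _ _ => rfl
  ext k
  simp [and_comm]

/-- The expectation `E[C̃ₙ(S₁/n, …, S_d/n)]` is written out as the finite sum over the values
`s : Fin d → {0,…,n}` of `(S₁, …, S_d)`, weighted by `∏ⱼ P(Sⱼ = sⱼ)`. -/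
theorem empBetaCopula_eq_binomial_smoothing_general (n d : ℕ)
    (R : Fin n → Fin d → ℕ) (u : Fin d → ℝ) :
    empBetaCopula n d R u
      = ∑ s : Fin d → Fin (n + 1),
          (∏ j : Fin d, binomPMF n (u j) (s j)) *
            rankCopula n d R (fun j => (s j : ℝ) / n) := by
  have row (i : Fin n) : ∏ j, betaCDF n (R i j) (u j) = ∑ s : Fin d → Fin (n + 1),
      (∏ j, binomPMF n (u j) (s j)) *
        ∏ j, if (R i j : ℝ) / n ≤ (s j : ℝ) / n then (1 : ℝ) else 0 := by
    -- a row `i` exists only if `n > 0`, so dividing by `n` preserves the order of ranks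
    have hn : (0 : ℝ) < n := by exact_mod_cast i.pos
    simp only [betaCDF_eq_sum_binomPMF, div_le_div_iff_of_pos_right hn, Nat.cast_le,
      ← Finset.prod_mul_distrib, mul_ite, mul_one, mul_zero]
    exact Fintype.prod_sum _
  simp only [empBetaCopula, rankCopula, row, Finset.mul_sum]
  rw [Finset.sum_comm]
  refine Finset.sum_congr rfl fun s _ => Finset.sum_congr rfl fun i _ => ?_
  ring

/-- Binomial smoothing: `ℂₙ^β(u) = E[C̃ₙ(S₁/n, …, S_d/n)]` where `S₁,…,S_d` are
independent with `Sⱼ ~ Binomial(n, uⱼ)`; the expectation is the finite sum over all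
possible values `s : Fin d → {0,…,n}` weighted by `∏ⱼ P(Sⱼ = sⱼ)`. -/
theorem empBetaCopula_eq_binomial_smoothing (n d : ℕ) (hn : 1 ≤ n)
    (R : Fin n → Fin d → ℕ) (hmem : ∀ i j, R i j ∈ Finset.Icc 1 n)
    (u : Fin d → ℝ) (hu : ∀ j, u j ∈ Set.Icc (0 : ℝ) 1) :
    empBetaCopula n d R u
      = ∑ s : Fin d → Fin (n + 1),
          (∏ j : Fin d, binomPMF n (u j) (s j)) *
            rankCopula n d R (fun j => (s j : ℝ) / n) :=
  empBetaCopula_eq_binomial_smoothing_general n d R u
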